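/- A-strategies σ, inst : S → E on an A-game E are in bijective correspondence with (ordinary) strategies σ' : S → expn(E) on the expansion, via θ(σ, inst)(s) = (σ(s), ε_s) where ε_s is the local instantiation; conversely every strategy σ' : S → expn(E) arises as θ(red ∘ σ', Inst ∘ σ'). -/

import Mathlib

/-- The order and consistency data of an event structure. -/
structure PreES (E : Type) where
  le : E → E → Prop
  con : Set E → Prop

namespace PreES

variable {E F : Type}

/-- A configuration: every finite subset is consistent, and it is down-closed. -/
def Config (P : PreES E) (x : Set E) : Prop :=
  (∀ X : Set E, X ⊆ x → X.Finite → P.con X) ∧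
  (∀ e e' : E, P.le e' e → e ∈ x → e' ∈ x)

/-- `e` is enabled at the configuration `x`: `x ∪ {e}` is again a configuration. -/
def Enabled (P : PreES E) (x : Set E) (e : E) : Prop :=
  e ∉ x ∧ P.Config (insert e x)

/-- Immediate causal dependency `e → e'` : `e ≠ e'`, `e ≤ e'` and nothing strictly between. -/
def Imm (P : PreES E) (e e' : E) : Prop :=
  e ≠ e' ∧ P.le e e' ∧ ∀ d, P.le e d → P.le d e' → d = e ∨ d = e'

/-- A total map of event structures: configurations map to configurations,
injectively on each configuration. -/
def IsMap (P : PreES E) (Q : PreES F) (f : E → F) : Prop :=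
  (∀ x : Set E, P.Config x → Q.Config (f '' x)) ∧
  (∀ x : Set E, P.Config x → ∀ e₁ ∈ x, ∀ e₂ ∈ x, f e₁ = f e₂ → e₁ = e₂)

end PreES

/-- An event structure. -/
structure ES (E : Type) extends PreES E where
  le_refl : ∀ e, le e e
  le_trans : ∀ a b c, le a b → le b c → le a c
  le_antisymm : ∀ a b, le a b → le b a → a = b
  causes_finite : ∀ e, {e' | le e' e}.Finite
  con_singleton : ∀ e, con {e}
  con_subset : ∀ X Y : Set E, Y ⊆ X → con X → con Y
  con_extend : ∀ (X : Set E) (e e' : E), con X → le e e' → e' ∈ X → con (insert e X)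

/-- No-overlap: events carrying the same variable are never concurrent. -/
def NoOverlap {E V : Type} (P : PreES E) (var : E → V) : Prop :=
  ∀ e e', var e = var e' →
    ¬(P.con {e, e'} ∧ ¬ P.le e e' ∧ ¬ P.le e' e)

/-- Race-freeness: enabled events of opposite polarities can occur jointly.
`true` is the polarity `+`, `false` is `−`. -/
def RaceFree {E : Type} (P : PreES E) (pol : E → Bool) : Prop :=
  ∀ x : Set E, P.Config x → ∀ e e', P.Enabled x e → P.Enabled x e' →
    pol e = true → pol e' = false → e ≠ e' → P.Config (insert e (insert e' x))

/-- An (ordinary) strategy: a total, polarity preserving map of event structures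
which is receptive and innocent. -/
def IsStrategy {SE E : Type} (S : PreES SE) (G : PreES E)
    (polS : SE → Bool) (polG : E → Bool) (σ : SE → E) : Prop :=
  PreES.IsMap S G σ ∧
  (∀ s, polG (σ s) = polS s) ∧
  (∀ x : Set SE, S.Config x → ∀ e, polG e = false → G.Enabled (σ '' x) e →
    ∃! s, S.Enabled x s ∧ σ s = e) ∧
  (∀ s s', S.Imm s s' → (polS s' = false ∨ polS s = true) → G.Imm (σ s) (σ s'))

/-- An `𝓐`-strategy on an `𝓐`-game: a total, polarity preserving map with an
instantiation function of matching sorts, receptive (for every element of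
matching sort) and innocent. -/
def IsAStrategy {SE E A V Srt : Type} (S : PreES SE) (G : PreES E)
    (polS : SE → Bool) (polG : E → Bool) (var : E → V)
    (sortA : A → Srt) (sortV : V → Srt)
    (σ : SE → E) (inst : SE → A) : Prop :=
  PreES.IsMap S G σ ∧
  (∀ s, polG (σ s) = polS s) ∧
  (∀ s, sortA (inst s) = sortV (var (σ s))) ∧
  (∀ x : Set SE, S.Config x → ∀ e, polG e = false → G.Enabled (σ '' x) e →
    ∀ a, sortA a = sortV (var e) →
      ∃! s, S.Enabled x s ∧ σ s = e ∧ inst s = a) ∧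
  (∀ s s', S.Imm s s' → (polS s' = false ∨ polS s = true) → G.Imm (σ s) (σ s'))

/-- An event of the `𝓐`-expansion: an event `e` together with a sort-respecting
instantiation of its down-closure `[e]` (encoded as an `Option`-valued function
whose domain is exactly `[e]`). -/
structure ExEvent {E A V Srt : Type} (P : PreES E) (var : E → V)
    (sortA : A → Srt) (sortV : V → Srt) where
  ev : E
  inst : E → Option A
  dom : ∀ e', (inst e').isSome ↔ P.le e' ev
  srt : ∀ e' a, inst e' = some a → sortA a = sortV (var e')

/-- The `𝓐`-expansion of a game, as order and consistency data. -/
def expn {E A V Srt : Type} (P : PreES E) (var : E → V)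
    (sortA : A → Srt) (sortV : V → Srt) : PreES (ExEvent P var sortA sortV) where
  le p q := P.le p.ev q.ev ∧ ∀ e', P.le e' p.ev → q.inst e' = p.inst e'
  con X := P.con (ExEvent.ev '' X) ∧ ∀ p ∈ X, ∀ q ∈ X, p.ev = q.ev → p = q

/-- The projection `red : expn(E) → E`. -/
def red {E A V Srt : Type} {P : PreES E} {var : E → V}
    {sortA : A → Srt} {sortV : V → Srt} (p : ExEvent P var sortA sortV) : E := p.ev

/-- The instantiation `Inst(e,ε) = ε(e)` (needs reflexivity of the order). -/
def ExEvent.Inst {E A V Srt : Type} {P : PreES E} {var : E → V}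
    {sortA : A → Srt} {sortV : V → Srt} (href : ∀ e, P.le e e)
    (p : ExEvent P var sortA sortV) : A :=
  (p.inst p.ev).get ((p.dom p.ev).mpr (href p.ev))

/-- Parallel composition of the order/consistency data of two event structures. -/
def parPre {E F : Type} (P : PreES E) (Q : PreES F) : PreES (E ⊕ F) where
  le x y :=
    match x, y with
    | .inl a, .inl b => P.le a b
    | .inr a, .inr b => Q.le a b
    | _, _ => False
  con X := P.con {a | Sum.inl a ∈ X} ∧ Q.con {b | Sum.inr b ∈ X}

/-- Restriction of the data of an event structure to a subset of events. -/
def subPre {E : Type} (P : PreES E) (p : E → Prop) : PreES {e : E // p e} where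
  le a b := P.le a.1 b.1
  con X := P.con (Subtype.val '' X)

/-!
Inside a configuration of the expansion the instantiations carried by its events are coherent,
so an event of the expansion extending a given configuration is determined by its underlying
event and the value at its top. Receptivity therefore transfers in both directions: a pair of an
enabled game event `e` and a value `a` of its sort corresponds to exactly one enabled event of the
expansion. Innocence transfers because immediate causality in the expansion is immediate
causality between the underlying events. Conversely, an `𝓐`-strategy `(σ, inst)` instantiates a
cause of `σ s` through its unique lift below `s`; any strategy over `σ` with top values `inst`
agrees with this one by coherence inside the image of `[s]`.
-/

open PreES

namespace ES

variable {F : Type} (S : ES F)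

theorem con_downset (s : F) : S.con {e | S.le e s} := by
  have key : ∀ X : Set F, X.Finite → X ⊆ {e | S.le e s} → S.con (insert s X) := by
    intro X hX
    induction X, hX using Set.Finite.induction_on with
    | empty => intro _; simpa using S.con_singleton s
    | @insert a X _ _ ih =>
      intro hsub
      rw [Set.insert_comm]
      exact S.con_extend _ a s (ih fun e he => hsub (Set.mem_insert_of_mem a he))
        (hsub (Set.mem_insert a X)) (Set.mem_insert s X)
  exact S.con_subset _ _ (Set.subset_insert s _) (key _ (S.causes_finite s) subset_rfl)

theorem config_downset (s : F) : S.Config {e | S.le e s} :=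
  ⟨fun _ hX _ => S.con_subset _ _ hX (S.con_downset s), fun _ _ h he => S.le_trans _ _ _ h he⟩

end ES

theorem PreES.IsMap.existsUnique_lift_of_le {SE E : Type} {S : ES SE} {Q : PreES E}
    {σ : SE → E} (hmap : IsMap S.toPreES Q σ) {s : SE} {e : E} (h : Q.le e (σ s)) :
    ∃! s', S.le s' s ∧ σ s' = e := by
  have hc := S.config_downset s
  obtain ⟨s', hs', rfl⟩ := (hmap.1 _ hc).2 (σ s) e h ⟨s, S.le_refl s, rfl⟩
  exact ⟨s', ⟨hs', rfl⟩, fun t ⟨ht, hte⟩ => hmap.2 _ hc t ht s' hs' hte⟩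

namespace ExEvent

section General

variable {E A V Srt : Type} {P : PreES E} {var : E → V} {sortA : A → Srt} {sortV : V → Srt}

def instAt (p : ExEvent P var sortA sortV) (e : E) (h : P.le e p.ev) : A :=
  (p.inst e).get ((p.dom e).mpr h)

theorem inst_eq_some_instAt (p : ExEvent P var sortA sortV) {e : E} (h : P.le e p.ev) :
    p.inst e = some (p.instAt e h) :=
  (Option.some_get _).symm

theorem inst_eq_none (p : ExEvent P var sortA sortV) {e : E} (h : ¬ P.le e p.ev) :
    p.inst e = none :=
  Option.not_isSome_iff_eq_none.mp (mt (p.dom e).mp h)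

theorem sortA_instAt (p : ExEvent P var sortA sortV) {e : E} (h : P.le e p.ev) :
    sortA (p.instAt e h) = sortV (var e) :=
  p.srt e _ (p.inst_eq_some_instAt h)

theorem sortA_Inst (href : ∀ e, P.le e e) (p : ExEvent P var sortA sortV) :
    sortA (p.Inst href) = sortV (var p.ev) :=
  p.sortA_instAt (href p.ev)

theorem ext_instAt {p q : ExEvent P var sortA sortV} (hev : p.ev = q.ev)
    (hinst : ∀ e (h : P.le e p.ev), p.instAt e h = q.instAt e (hev ▸ h)) : p = q := by
  have : p.inst = q.inst := funext fun e => by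
    by_cases h : P.le e p.ev
    · rw [p.inst_eq_some_instAt h, q.inst_eq_some_instAt (hev ▸ h), hinst e h]
    · rw [p.inst_eq_none h, q.inst_eq_none (hev ▸ h)]
  cases p; cases q; cases hev; cases this; rfl

open Classical in
noncomputable def ofFun (e : E) (f : ∀ e', P.le e' e → A)
    (hf : ∀ e' h, sortA (f e' h) = sortV (var e')) : ExEvent P var sortA sortV where
  ev := e
  inst e' := if h : P.le e' e then some (f e' h) else none
  dom e' := by by_cases h : P.le e' e <;> simp [h]
  srt e' a ha := by
    by_cases h : P.le e' e
    · simp only [dif_pos h, Option.some_inj] at ha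
      exact ha ▸ hf e' h
    · simp [h] at ha

variable {e : E} {f : ∀ e', P.le e' e → A} {hf : ∀ e' h, sortA (f e' h) = sortV (var e')}

@[simp]
theorem ofFun_instAt {e' : E} (h : P.le e' e) :
    (ofFun e f hf : ExEvent P var sortA sortV).instAt e' h = f e' h := by
  simp [instAt, ofFun, h]

theorem instAt_eq_of_expn_le {p q : ExEvent P var sortA sortV}
    (hpq : (expn P var sortA sortV).le p q) {e : E} (hp : P.le e p.ev) (hq : P.le e q.ev) :
    q.instAt e hq = p.instAt e hp :=
  Option.some_injective _ <| by
    rw [← q.inst_eq_some_instAt, ← p.inst_eq_some_instAt]; exact hpq.2 e hp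

end General

section Game

variable {E A V Srt : Type} {G : ES E} {var : E → V} {sortA : A → Srt} {sortV : V → Srt}

theorem expn_le_of_instAt_eq {p q : ExEvent G.toPreES var sortA sortV} (hle : G.le p.ev q.ev)
    (hinst : ∀ e (hp : G.le e p.ev), q.instAt e (G.le_trans _ _ _ hp hle) = p.instAt e hp) :
    (expn G.toPreES var sortA sortV).le p q :=
  ⟨hle, fun e hp => by
    rw [q.inst_eq_some_instAt (G.le_trans _ _ _ hp hle), p.inst_eq_some_instAt hp, hinst e hp]⟩

theorem eq_of_expn_le_of_ev_eq {p q : ExEvent G.toPreES var sortA sortV}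
    (hpq : (expn G.toPreES var sortA sortV).le p q) (hev : p.ev = q.ev) : p = q :=
  ext_instAt hev fun _ h => (instAt_eq_of_expn_le hpq h _).symm

noncomputable def restrict (p : ExEvent G.toPreES var sortA sortV) (e : E) (h : G.le e p.ev) :
    ExEvent G.toPreES var sortA sortV :=
  ofFun e (fun e' h' => p.instAt e' (G.le_trans _ _ _ h' h)) fun _ _ => p.sortA_instAt _

section Restrict

variable (p : ExEvent G.toPreES var sortA sortV) {e : E} (h : G.le e p.ev)

theorem restrict_instAt {e' : E} (h' : G.le e' e) :
    (p.restrict e h).instAt e' h' = p.instAt e' (G.le_trans _ _ _ h' h) :=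
  ofFun_instAt h'

theorem restrict_Inst : (p.restrict e h).Inst G.le_refl = p.instAt e h :=
  p.restrict_instAt h (G.le_refl e)

theorem restrict_expn_le : (expn G.toPreES var sortA sortV).le (p.restrict e h) p :=
  expn_le_of_instAt_eq h fun _ h' => (p.restrict_instAt h h').symm

end Restrict

section Config

variable {y : Set (ExEvent G.toPreES var sortA sortV)}
  (hy : (expn G.toPreES var sortA sortV).Config y)
include hy

theorem eq_of_mem_config {p q : ExEvent G.toPreES var sortA sortV} (hp : p ∈ y) (hq : q ∈ y)
    (hev : p.ev = q.ev) : p = q :=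
  (hy.1 {p, q} (Set.insert_subset hp (Set.singleton_subset_iff.mpr hq)) (Set.toFinite _)).2
    p (by simp) q (by simp) hev

theorem restrict_mem_config {p : ExEvent G.toPreES var sortA sortV} (hp : p ∈ y) {e : E}
    (h : G.le e p.ev) : p.restrict e h ∈ y :=
  hy.2 p _ (p.restrict_expn_le h) hp

theorem instAt_eq_Inst_of_mem_config {p q : ExEvent G.toPreES var sortA sortV} (hp : p ∈ y)
    (hq : q ∈ y) {e : E} (hqe : q.ev = e) (h : G.le e p.ev) : p.instAt e h = q.Inst G.le_refl :=
  (p.restrict_Inst h).symm.trans <|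
    congrArg (Inst G.le_refl) (eq_of_mem_config hy (restrict_mem_config hy hp h) hq hqe.symm)

theorem config_image_ev : G.Config (ev '' y) := by
  refine ⟨fun X hX hXfin => ?_, ?_⟩
  · have himg : ev '' (y ∩ ev ⁻¹' X) = X := by
      refine (Set.image_subset_iff.mpr Set.inter_subset_right).antisymm fun e he => ?_
      obtain ⟨p, hp, rfl⟩ := hX he
      exact ⟨p, ⟨hp, he⟩, rfl⟩
    have hfin : (y ∩ ev ⁻¹' X).Finite :=
      Set.Finite.of_finite_image (by rwa [himg]) fun p hp q hq => eq_of_mem_config hy hp.1 hq.1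
    exact himg ▸ (hy.1 _ Set.inter_subset_left hfin).1
  · rintro _ e h ⟨p, hp, rfl⟩
    exact ⟨p.restrict e h, restrict_mem_config hy hp h, rfl⟩

end Config

theorem config_of_image_ev {y : Set (ExEvent G.toPreES var sortA sortV)}
    (himg : G.Config (ev '' y)) (hinj : ∀ p ∈ y, ∀ q ∈ y, p.ev = q.ev → p = q)
    (hdown : ∀ p q, (expn G.toPreES var sortA sortV).le q p → p ∈ y → q ∈ y) :
    (expn G.toPreES var sortA sortV).Config y :=
  ⟨fun _ hX hXfin => ⟨himg.1 _ (Set.image_mono hX) (hXfin.image _),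
      fun p hp q hq => hinj p (hX hp) q (hX hq)⟩, hdown⟩

theorem imm_ev_of_expn_imm {p q : ExEvent G.toPreES var sortA sortV}
    (h : (expn G.toPreES var sortA sortV).Imm p q) : G.Imm p.ev q.ev := by
  obtain ⟨hne, hle, hbetween⟩ := h
  refine ⟨fun hev => hne (eq_of_expn_le_of_ev_eq hle hev), hle.1, fun d h₁ h₂ => ?_⟩
  have hpd : (expn G.toPreES var sortA sortV).le p (q.restrict d h₂) :=
    expn_le_of_instAt_eq h₁ fun e he =>
      (q.restrict_instAt h₂ (G.le_trans _ _ _ he h₁)).trans (instAt_eq_of_expn_le hle he _)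
  rcases hbetween _ hpd (q.restrict_expn_le h₂) with h | h
  · exact Or.inl (congrArg ev h)
  · exact Or.inr (congrArg ev h)

theorem expn_imm_of_imm_ev {p q : ExEvent G.toPreES var sortA sortV}
    (hle : (expn G.toPreES var sortA sortV).le p q) (h : G.Imm p.ev q.ev) :
    (expn G.toPreES var sortA sortV).Imm p q :=
  ⟨fun hpq => h.1 (congrArg ev hpq), hle, fun d h₁ h₂ =>
    (h.2.2 d.ev h₁.1 h₂.1).imp (fun hd => (eq_of_expn_le_of_ev_eq h₁ hd.symm).symm)
      (eq_of_expn_le_of_ev_eq h₂)⟩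

theorem eq_of_config_insert {y : Set (ExEvent G.toPreES var sortA sortV)}
    {p q : ExEvent G.toPreES var sortA sortV}
    (hp : (expn G.toPreES var sortA sortV).Config (insert p y))
    (hq : (expn G.toPreES var sortA sortV).Config (insert q y))
    (hev : p.ev = q.ev) (hInst : p.Inst G.le_refl = q.Inst G.le_refl) : p = q := by
  refine ext_instAt hev fun e he => ?_
  by_cases hep : p.ev = e
  · exact (instAt_eq_Inst_of_mem_config hp (Set.mem_insert p y) (Set.mem_insert p y) hep
      he).trans (hInst.trans (instAt_eq_Inst_of_mem_config hq (Set.mem_insert q y)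
        (Set.mem_insert q y) (hev ▸ hep) _).symm)
  · have hr : p.restrict e he ∈ y :=
      (restrict_mem_config hp (Set.mem_insert p y) he).resolve_left
        fun h => hep (congrArg ev h).symm
    exact (instAt_eq_Inst_of_mem_config hp (Set.mem_insert p y) (Set.mem_insert_of_mem p hr) rfl
      he).trans (instAt_eq_Inst_of_mem_config hq (Set.mem_insert q y) (Set.mem_insert_of_mem q hr)
        rfl _).symm

open Classical in
/-- By `hcfg`, the `else` branch is reached only at `e` itself. -/
noncomputable def extend (y : Set (ExEvent G.toPreES var sortA sortV)) (e : E) (a : A)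
    (hcfg : G.Config (insert e (ev '' y))) (ha : sortA a = sortV (var e)) :
    ExEvent G.toPreES var sortA sortV :=
  ofFun e (fun e' _ => if h : ∃ q ∈ y, q.ev = e' then h.choose.Inst G.le_refl else a)
    fun e' h' => by
      split_ifs with h
      · exact (h.choose.sortA_Inst G.le_refl).trans (by rw [h.choose_spec.2])
      · obtain rfl | hmem := hcfg.2 e e' h' (Set.mem_insert e _)
        · exact ha
        · exact absurd hmem h

section Extend

variable {y : Set (ExEvent G.toPreES var sortA sortV)} {e : E} {a : A}
  (hcfg : G.Config (insert e (ev '' y))) (ha : sortA a = sortV (var e))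

theorem extend_Inst (hnot : e ∉ ev '' y) : (extend y e a hcfg ha).Inst G.le_refl = a :=
  (ofFun_instAt (G.le_refl e)).trans (dif_neg hnot)

theorem extend_instAt_eq_Inst (hy : (expn G.toPreES var sortA sortV).Config y)
    {q : ExEvent G.toPreES var sortA sortV} (hq : q ∈ y) (h : G.le q.ev e) :
    (extend y e a hcfg ha).instAt q.ev h = q.Inst G.le_refl := by
  have hmem : ∃ p ∈ y, p.ev = q.ev := ⟨q, hq, rfl⟩
  simp only [extend, ofFun_instAt, dif_pos hmem]
  exact congrArg (Inst G.le_refl)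
    (eq_of_mem_config hy hmem.choose_spec.1 hq hmem.choose_spec.2)

theorem extend_enabled (hy : (expn G.toPreES var sortA sortV).Config y) (hnot : e ∉ ev '' y) :
    (expn G.toPreES var sortA sortV).Enabled y (extend y e a hcfg ha) := by
  refine ⟨fun hmem => hnot ⟨_, hmem, rfl⟩, config_of_image_ev ?_ ?_ ?_⟩
  · rwa [Set.image_insert_eq]
  · rintro p (rfl | hp) q (rfl | hq) hev
    · rfl
    · exact absurd ⟨q, hq, hev.symm⟩ hnot
    · exact absurd ⟨p, hp, hev⟩ hnot
    · exact eq_of_mem_config hy hp hq hev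
  · rintro p r hle (rfl | hp)
    · by_cases hre : r.ev = e
      · exact Or.inl (eq_of_expn_le_of_ev_eq hle hre)
      obtain ⟨q, hq, hqr⟩ := (hcfg.2 e r.ev hle.1 (Set.mem_insert e _)).resolve_left hre
      have hqr' : q = r := ext_instAt hqr fun e' he' => by
        have hr := restrict_mem_config hy hq he'
        have he'r : G.le e' r.ev := hqr ▸ he'
        exact (instAt_eq_Inst_of_mem_config hy hq hr rfl he').trans
          ((extend_instAt_eq_Inst hcfg ha hy hr (G.le_trans _ _ _ he'r hle.1)).symm.trans
            (instAt_eq_of_expn_le hle he'r _))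
      exact Or.inr (hqr' ▸ hq)
    · exact Set.mem_insert_of_mem _ (hy.2 p r hle hp)

end Extend

end Game

end ExEvent

open ExEvent

section Expansion

variable {SE E A V Srt : Type} {G : ES E} {var : E → V} {sortA : A → Srt} {sortV : V → Srt}

theorem PreES.IsMap.ev_comp {S : PreES SE} {σ' : SE → ExEvent G.toPreES var sortA sortV}
    (hmap : IsMap S (expn G.toPreES var sortA sortV) σ') :
    IsMap S G.toPreES (fun s => (σ' s).ev) :=
  ⟨fun x hx => Set.image_image ev σ' x ▸ config_image_ev (hmap.1 x hx),
    fun x hx s₁ h₁ s₂ h₂ hev =>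
      hmap.2 x hx s₁ h₁ s₂ h₂
        (eq_of_mem_config (hmap.1 x hx) ⟨s₁, h₁, rfl⟩ ⟨s₂, h₂, rfl⟩ hev)⟩

theorem existsUnique_enabled_ev_Inst {S : PreES SE}
    {σ' : SE → ExEvent G.toPreES var sortA sortV}
    (hmap : IsMap S (expn G.toPreES var sortA sortV) σ') {x : Set SE} (hx : S.Config x) {e : E}
    (hrec : ∀ q : ExEvent G.toPreES var sortA sortV, q.ev = e →
      (expn G.toPreES var sortA sortV).Enabled (σ' '' x) q → ∃! s, S.Enabled x s ∧ σ' s = q)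
    (hen : G.Enabled ((fun s => (σ' s).ev) '' x) e) {a : A} (ha : sortA a = sortV (var e)) :
    ∃! s, S.Enabled x s ∧ (σ' s).ev = e ∧ (σ' s).Inst G.le_refl = a := by
  have hy := hmap.1 x hx
  rw [← Set.image_image ev σ' x] at hen
  have hq := extend_enabled hen.2 ha hy hen.1
  obtain ⟨s, ⟨hs, hsq⟩, huniq⟩ := hrec _ rfl hq
  refine ⟨s, ⟨hs, by rw [hsq]; rfl, by rw [hsq]; exact extend_Inst hen.2 ha hen.1⟩,
    fun t ⟨ht, hte, hta⟩ => huniq t ⟨ht, ?_⟩⟩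
  have hcfg := hmap.1 _ ht.2
  rw [Set.image_insert_eq] at hcfg
  exact eq_of_config_insert hcfg hq.2 hte (hta.trans (extend_Inst hen.2 ha hen.1).symm)

variable {S : ES SE} {σ : SE → E} {inst : SE → A} (hmap : IsMap S.toPreES G.toPreES σ)
  (hsort : ∀ s, sortA (inst s) = sortV (var (σ s)))

/-- The paper's `θ(σ, inst)`: `s ↦ (σ s, ε_s)`, where `ε_s` is the local instantiation. -/
noncomputable def toExpn (s : SE) : ExEvent G.toPreES var sortA sortV :=
  ofFun (σ s) (fun _ h => inst (hmap.existsUnique_lift_of_le h).exists.choose) fun _ h => by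
    obtain ⟨-, he⟩ := (hmap.existsUnique_lift_of_le h).exists.choose_spec
    rw [hsort, he]

theorem toExpn_instAt {s s' : SE} (hs : S.le s' s) {e : E} (h : G.le e (σ s)) (he : σ s' = e) :
    (toExpn hmap hsort s).instAt e h = inst s' :=
  (ofFun_instAt h).trans <| congrArg inst <|
    (hmap.existsUnique_lift_of_le h).unique (hmap.existsUnique_lift_of_le h).exists.choose_spec
      ⟨hs, he⟩

theorem toExpn_Inst (s : SE) : (toExpn hmap hsort s).Inst G.le_refl = inst s :=
  toExpn_instAt hmap hsort (S.le_refl s) (G.le_refl (σ s)) rfl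

theorem toExpn_le_toExpn {s s' : SE} (hs : S.le s s') (hσ : G.le (σ s) (σ s')) :
    (expn G.toPreES var sortA sortV).le (toExpn hmap hsort s) (toExpn hmap hsort s') :=
  expn_le_of_instAt_eq hσ fun _ h => by
    obtain ⟨u, hu, hue⟩ := (hmap.existsUnique_lift_of_le h).exists
    exact (toExpn_instAt hmap hsort (S.le_trans _ _ _ hu hs) _ hue).trans
      (toExpn_instAt hmap hsort hu h hue).symm

theorem eq_toExpn_of_expn_le {s : SE} {r : ExEvent G.toPreES var sortA sortV}
    (hle : (expn G.toPreES var sortA sortV).le r (toExpn hmap hsort s)) :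
    ∃ s', S.le s' s ∧ r = toExpn hmap hsort s' := by
  obtain ⟨s', hs', hs'r⟩ := (hmap.existsUnique_lift_of_le hle.1).exists
  refine ⟨s', hs', ext_instAt hs'r.symm fun e he => ?_⟩
  obtain ⟨u, hu, hue⟩ := (hmap.existsUnique_lift_of_le (hs'r ▸ he)).exists
  have hes : G.le e (σ s) := G.le_trans _ _ _ he hle.1
  exact (instAt_eq_of_expn_le hle he hes).symm.trans <|
    (toExpn_instAt hmap hsort (S.le_trans _ _ _ hu hs') hes hue).trans
      (toExpn_instAt hmap hsort hu _ hue).symm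

theorem isMap_toExpn : IsMap S.toPreES (expn G.toPreES var sortA sortV) (toExpn hmap hsort) := by
  refine ⟨fun x hx => config_of_image_ev ?_ ?_ ?_,
    fun x hx s₁ h₁ s₂ h₂ h => hmap.2 x hx s₁ h₁ s₂ h₂ (congrArg ev h)⟩
  · rw [Set.image_image]
    exact hmap.1 x hx
  · rintro _ ⟨s₁, h₁, rfl⟩ _ ⟨s₂, h₂, rfl⟩ hev
    exact congrArg _ (hmap.2 x hx s₁ h₁ s₂ h₂ hev)
  · rintro _ r hle ⟨s, hs, rfl⟩
    obtain ⟨s', hs', rfl⟩ := eq_toExpn_of_expn_le hmap hsort hle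
    exact ⟨s', hx.2 s s' hs' hs, rfl⟩

theorem existsUnique_enabled_toExpn {x : Set SE} {q : ExEvent G.toPreES var sortA sortV}
    (hq : (expn G.toPreES var sortA sortV).Enabled (toExpn hmap hsort '' x) q)
    (hrec : G.Enabled (σ '' x) q.ev → ∀ a, sortA a = sortV (var q.ev) →
      ∃! s, S.Enabled x s ∧ σ s = q.ev ∧ inst s = a) :
    ∃! s, S.Enabled x s ∧ toExpn hmap hsort s = q := by
  have himg : ev '' (toExpn hmap hsort '' x) = σ '' x := Set.image_image _ _ _
  have hnot : q.ev ∉ σ '' x := by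
    rintro ⟨s, hs, hev⟩
    have hsq : toExpn hmap hsort s = q :=
      eq_of_mem_config hq.2 (Set.mem_insert_of_mem _ ⟨s, hs, rfl⟩) (Set.mem_insert _ _) hev
    exact hq.1 (hsq ▸ Set.mem_image_of_mem _ hs)
  have hcfg := config_image_ev hq.2
  rw [Set.image_insert_eq, himg] at hcfg
  obtain ⟨s, ⟨hs, hsq, hsa⟩, huniq⟩ := hrec ⟨hnot, hcfg⟩ _ (q.sortA_Inst G.le_refl)
  have hscfg := (isMap_toExpn hmap hsort).1 _ hs.2
  rw [Set.image_insert_eq] at hscfg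
  refine ⟨s, ⟨hs, eq_of_config_insert hscfg hq.2 hsq ((toExpn_Inst hmap hsort s).trans hsa)⟩,
    fun t ⟨ht, htq⟩ => huniq t ⟨ht, ?_, ?_⟩⟩
  · rw [← htq]; rfl
  · rw [← htq, toExpn_Inst]

theorem eq_toExpn {τ : SE → ExEvent G.toPreES var sortA sortV}
    (hτ : IsMap S.toPreES (expn G.toPreES var sortA sortV) τ) (hev : ∀ s, (τ s).ev = σ s)
    (hInst : ∀ s, (τ s).Inst G.le_refl = inst s) : τ = toExpn hmap hsort := by
  funext s
  refine ext_instAt (hev s) fun e he => ?_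
  have he' : G.le e (σ s) := hev s ▸ he
  obtain ⟨s', hs', hs'e⟩ := (hmap.existsUnique_lift_of_le he').exists
  exact (instAt_eq_Inst_of_mem_config (hτ.1 _ (S.config_downset s)) ⟨s, S.le_refl s, rfl⟩
    ⟨s', hs', rfl⟩ ((hev s').trans hs'e) he).trans <|
      (hInst s').trans (toExpn_instAt hmap hsort hs' he' hs'e).symm

end Expansion

theorem aStrategy_expansion_bijection_general {SE E A V Srt : Type}
    (SS : ES SE) (G : ES E) (polS : SE → Bool) (polG : E → Bool)
    (var : E → V) (sortA : A → Srt) (sortV : V → Srt) :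
    (∀ σ' : SE → ExEvent G.toPreES var sortA sortV,
      IsStrategy SS.toPreES (expn G.toPreES var sortA sortV) polS
        (fun p => polG p.ev) σ' →
      IsAStrategy SS.toPreES G.toPreES polS polG var sortA sortV
        (fun s => (σ' s).ev) (fun s => (σ' s).Inst G.le_refl)) ∧
    (∀ (σ : SE → E) (inst : SE → A),
      IsAStrategy SS.toPreES G.toPreES polS polG var sortA sortV σ inst →
      ∃! σ' : SE → ExEvent G.toPreES var sortA sortV,
        IsStrategy SS.toPreES (expn G.toPreES var sortA sortV) polS
          (fun p => polG p.ev) σ' ∧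
        (∀ s, (σ' s).ev = σ s) ∧
        (∀ s, (σ' s).Inst G.le_refl = inst s)) := by
  constructor
  · rintro σ' ⟨hmap, hpol, hrec, hinn⟩
    refine ⟨hmap.ev_comp, hpol, fun s => (σ' s).sortA_Inst _, ?_,
      fun s s' hss' hpol' => imm_ev_of_expn_imm (hinn s s' hss' hpol')⟩
    intro x hx e hneg hen a ha
    exact existsUnique_enabled_ev_Inst hmap hx
      (fun q hq => hrec x hx q (hq ▸ hneg : polG q.ev = false)) hen ha
  · rintro σ inst ⟨hmap, hpol, hsort, hrec, hinn⟩
    refine ⟨toExpn hmap hsort,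
      ⟨⟨isMap_toExpn hmap hsort, hpol, ?_, ?_⟩, fun _ => rfl, toExpn_Inst hmap hsort⟩,
      fun τ ⟨hτ, hev, hInst⟩ => eq_toExpn hmap hsort hτ.1 hev hInst⟩
    · exact fun x hx q hneg hq =>
        existsUnique_enabled_toExpn hmap hsort hq (hrec x hx q.ev hneg)
    · intro s s' hss' hpol'
      have hσ := hinn s s' hss' hpol'
      exact expn_imm_of_imm_ev (toExpn_le_toExpn hmap hsort hss'.2.1 hσ.2.1) hσ

/-- `𝓐`-strategies `σ, inst : S → E` on an `𝓐`-game `E` are in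
bijective correspondence with ordinary strategies `σ' : S → expn(E)`:
each strategy `σ'` on the expansion induces the `𝓐`-strategy
`(red ∘ σ', Inst ∘ σ')`, and conversely every `𝓐`-strategy arises this way
from a unique strategy on the expansion. -/
theorem aStrategy_expansion_bijection {SE E A V Srt : Type}
    (SS : ES SE) (G : ES E) (polS : SE → Bool) (polG : E → Bool)
    (var : E → V) (sortA : A → Srt) (sortV : V → Srt)
    (hrf : RaceFree G.toPreES polG) (hno : NoOverlap G.toPreES var) :
    (∀ σ' : SE → ExEvent G.toPreES var sortA sortV,
      IsStrategy SS.toPreES (expn G.toPreES var sortA sortV) polS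
        (fun p => polG p.ev) σ' →
      IsAStrategy SS.toPreES G.toPreES polS polG var sortA sortV
        (fun s => (σ' s).ev) (fun s => (σ' s).Inst G.le_refl)) ∧
    (∀ (σ : SE → E) (inst : SE → A),
      IsAStrategy SS.toPreES G.toPreES polS polG var sortA sortV σ inst →
      ∃! σ' : SE → ExEvent G.toPreES var sortA sortV,
        IsStrategy SS.toPreES (expn G.toPreES var sortA sortV) polS
          (fun p => polG p.ev) σ' ∧
        (∀ s, (σ' s).ev = σ s) ∧
        (∀ s, (σ' s).Inst G.le_refl = inst s)) :=
  aStrategy_expansion_bijection_general SS G polS polG var sortA sortV
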